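/- The Driscoll–Healy quadrature weights b_j = sin((2j+1)π/(4L)) · (2/L) · ∑_{l=0}^{L-1} (1/(2l+1)) · sin((2j+1)(2l+1)π/(4L)) are strictly positive for all j in {0,...,2L-1} and every positive integer L. -/

import Mathlib

/-!
With `x = (2j+1)π/(4L) ∈ (0, π)` the weight is `(2/L) sin x · ∑_{l<L} sin((2l+1)x)/(2l+1)`.
Multiplying the sum by `2 sin x` turns its `l`-th term into `(d_{l+1} - d_l)/(2l+1)` with
`d_l = 1 - cos(2lx) ≥ 0` and `d_0 = 0`. Abel summation against the decreasing weights `1/(2l+1)`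
then gives a sum of nonnegative terms, one of which is a positive multiple of `d_1 = 2 sin² x > 0`.
-/

/-- The Driscoll–Healy quadrature weight `b_j` of order `L`. -/
noncomputable def dhWeight (L j : ℕ) : ℝ :=
  Real.sin ((2 * (j : ℝ) + 1) * Real.pi / (4 * (L : ℝ))) * (2 / (L : ℝ)) *
    ∑ l ∈ Finset.range L, (1 / (2 * (l : ℝ) + 1)) *
      Real.sin ((2 * (j : ℝ) + 1) * (2 * (l : ℝ) + 1) * Real.pi / (4 * (L : ℝ)))

open Finset

section AbelSummation

variable {R : Type*} [CommRing R]

theorem sum_range_succ_mul_sub_eq (a d : ℕ → R) (hd₀ : d 0 = 0) (n : ℕ) :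
    ∑ l ∈ range (n + 1), a l * (d (l + 1) - d l) =
      a n * d (n + 1) + ∑ l ∈ range n, (a l - a (l + 1)) * d (l + 1) := by
  induction n with
  | zero => simp [hd₀]
  | succ n ih =>
    rw [sum_range_succ, ih, sum_range_succ]
    ring

variable [LinearOrder R] [IsStrictOrderedRing R]

theorem sum_range_mul_sub_pos {a d : ℕ → R} (ha : Antitone a) (ha_nonneg : ∀ l, 0 ≤ a l)
    (ha₁ : a 1 < a 0) (hd : ∀ l, 0 ≤ d l) (hd₀ : d 0 = 0) (hd₁ : 0 < d 1) {n : ℕ}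
    (hn : n ≠ 0) : 0 < ∑ l ∈ range n, a l * (d (l + 1) - d l) := by
  obtain ⟨m, rfl⟩ := Nat.exists_eq_succ_of_ne_zero hn
  rw [sum_range_succ_mul_sub_eq a d hd₀]
  have h_terms : ∀ l ∈ range m, 0 ≤ (a l - a (l + 1)) * d (l + 1) := fun l _ =>
    mul_nonneg (sub_nonneg.2 (ha l.le_succ)) (hd _)
  rcases m with _ | m
  · simpa using mul_pos (ha_nonneg 1 |>.trans_lt ha₁) hd₁
  · refine add_pos_of_nonneg_of_pos (mul_nonneg (ha_nonneg _) (hd _)) ?_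
    exact sum_pos' h_terms ⟨0, by simp, mul_pos (sub_pos.2 ha₁) hd₁⟩

end AbelSummation

open Real

theorem two_mul_sin_mul_sin_odd_mul (x : ℝ) (l : ℝ) :
    2 * sin x * sin ((2 * l + 1) * x) = cos (2 * l * x) - cos (2 * (l + 1) * x) := by
  rw [cos_sub_cos, show (2 * l * x + 2 * (l + 1) * x) / 2 = (2 * l + 1) * x by ring,
    show (2 * l * x - 2 * (l + 1) * x) / 2 = -x by ring, sin_neg]
  ring

theorem sum_range_sin_odd_mul_div_pos {x : ℝ} (hx₀ : 0 < x) (hxπ : x < π) {n : ℕ}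
    (hn : n ≠ 0) :
    0 < ∑ l ∈ range n, (1 / (2 * (l : ℝ) + 1)) * sin ((2 * l + 1) * x) := by
  have hsin : 0 < sin x := sin_pos_of_pos_of_lt_pi hx₀ hxπ
  set a : ℕ → ℝ := fun l => 1 / (2 * (l : ℝ) + 1)
  set d : ℕ → ℝ := fun l => 1 - cos (2 * (l : ℝ) * x)
  have ha : Antitone a := fun k m hkm => by
    simp only [a]
    gcongr
  have hd₁ : 0 < d 1 := by
    simp only [d, Nat.cast_one, mul_one, cos_two_mul_eq_one_sub]
    linarith [pow_pos hsin 2]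
  have h_abel : 0 < ∑ l ∈ range n, a l * (d (l + 1) - d l) :=
    sum_range_mul_sub_pos (d := d) ha (fun _ => by positivity) (by norm_num [a])
      (fun _ => sub_nonneg.2 (cos_le_one _)) (by simp [d]) hd₁ hn
  have h_eq : ∑ l ∈ range n, a l * (d (l + 1) - d l) =
      2 * sin x * ∑ l ∈ range n, (1 / (2 * (l : ℝ) + 1)) * sin ((2 * l + 1) * x) := by
    rw [mul_sum]
    refine sum_congr rfl fun l _ => ?_
    rw [mul_left_comm, two_mul_sin_mul_sin_odd_mul]
    simp only [a, d, Nat.cast_succ]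
    ring
  rw [h_eq] at h_abel
  exact pos_of_mul_pos_right h_abel (by positivity)

theorem dhWeight_pos (L : ℕ) (hL : 1 ≤ L) (j : ℕ) (hj : j < 2 * L) :
    0 < dhWeight L j := by
  set x : ℝ := (2 * (j : ℝ) + 1) * π / (4 * L) with hx
  have hx₀ : 0 < x := by positivity
  have hxπ : x < π := by
    have hjL : (j : ℝ) + 1 ≤ 2 * L := by exact_mod_cast hj
    rw [div_lt_iff₀ (by positivity)]
    nlinarith [pi_pos]
  have h_sum : ∑ l ∈ range L, (1 / (2 * (l : ℝ) + 1)) *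
        sin ((2 * (j : ℝ) + 1) * (2 * (l : ℝ) + 1) * π / (4 * L)) =
      ∑ l ∈ range L, (1 / (2 * (l : ℝ) + 1)) * sin ((2 * l + 1) * x) :=
    sum_congr rfl fun l _ => by rw [hx]; ring_nf
  rw [dhWeight, h_sum]
  exact mul_pos (mul_pos (sin_pos_of_pos_of_lt_pi hx₀ hxπ) (by positivity))
    (sum_range_sin_odd_mul_div_pos hx₀ hxπ (by omega))
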